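/- Let P be a large-tree forcing notion, n ≥ 1, T an n-collage over P, and D ⊆ P×_{E0}P an open dense subset of P×_{E0}P. Then there is an n-collage Q over P such that Q ⊆_n T and ⟨Q→s, Q→t⟩ ∈ D whenever s, t ∈ 2^n and s(n−1) ≠ t(n−1). -/

import Mathlib

namespace E0L

/-- Finite binary strings `2^{<ω}`. -/
abbrev Str : Type := List Bool

/-- Sets of binary strings (in particular, trees). -/
abbrev Tr : Type := Set Str

/-- The action `s·t` of a string on a string:
`(s·t)(k) = t(k) + s(k) mod 2` for `k < min(|s|,|t|)` and `(s·t)(k) = t(k)` otherwise. -/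
def act (s t : Str) : Str := List.ofFn fun k : Fin t.length => Bool.xor (s.getD k false) (t.get k)

/-- The action `s·T` of a string on a set of strings. -/
def actT (s : Str) (T : Tr) : Tr := (act s) '' T

/-- `T ↾ s = {t ∈ T : s ⊆ t or t ⊆ s}`. -/
def restr (T : Tr) (s : Str) : Tr := {t ∈ T | s <+: t ∨ t <+: s}

/-- `[T]`, the set of infinite branches of `T` (as elements of Cantor space `2^ω`). -/
def branches (T : Tr) : Set (ℕ → Bool) := {x | ∀ n : ℕ, (List.ofFn fun k : Fin n => x k) ∈ T}

/-- `T[s] = {t : s ⊆ t or t ⊂ s}`. -/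
def Tbr (s : Str) : Tr := {t | s <+: t ∨ (t <+: s ∧ t ≠ s)}

/-- `LTwit T r q` : the strings `q i n` witness that `T` is an E0-large tree with stem `r`:
`|q^0_n| = |q^1_n| ≥ 1`, `q^i_n(0) = i`, and `T` consists of all initial segments of strings
of the form `r⌢q^{i(0)}_0⌢…⌢q^{i(n)}_n`. -/
def LTwit (T : Tr) (r : Str) (q : ℕ → Bool → Str) : Prop :=
  (∀ n : ℕ, (q n true).length = (q n false).length ∧ 1 ≤ (q n false).length) ∧
  (∀ n : ℕ, ∀ i : Bool, (q n i).head? = some i) ∧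
  T = {t | ∃ n : ℕ, ∃ f : ℕ → Bool,
        t <+: r ++ ((List.range (n+1)).map (fun k => q k (f k))).flatten}

/-- `T` is an E0-large tree (`T ∈ LT`). -/
def IsLT (T : Tr) : Prop := ∃ r q, LTwit T r q

/-- `stem T` : the longest `s ∈ T` with `T = T↾s`. -/
noncomputable def stem (T : Tr) : Str :=
  Classical.epsilon fun s => s ∈ T ∧ restr T s = T ∧ ∀ t ∈ T, restr T t = T → t.length ≤ s.length

/-- The canonical witness `(r, q)` of an E0-large tree. -/
noncomputable def witness (T : Tr) : Str × (ℕ → Bool → Str) :=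
  Classical.epsilon fun rq => LTwit T rq.1 rq.2

/-- Splitting levels computed from a witness: `spl_0 = |r|`, `spl_{n+1} = spl_n + |q^i_n|`. -/
def splN (r : Str) (q : ℕ → Bool → Str) : ℕ → ℕ
  | 0 => r.length
  | n+1 => splN r q n + (q n false).length

/-- `spl T n`, the `n`-th splitting level of an E0-large tree `T`. -/
noncomputable def spl (T : Tr) (n : ℕ) : ℕ := splN (witness T).1 (witness T).2 n

/-- Simple splitting `T→i = T↾(stem(T)⌢i)`. -/
noncomputable def split1 (T : Tr) (i : Bool) : Tr := restr T (stem T ++ [i])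

/-- Iterated splitting `T→s`: `T→Λ = T`, `T→(s⌢i) = (T→s)→i`. -/
noncomputable def splitS (T : Tr) (s : Str) : Tr := s.foldl split1 T

/-- `S ⊆_n T` : `S ⊆ T` and `spl_k(S) = spl_k(T)` for all `k < n`. -/
def subN (n : ℕ) (S T : Tr) : Prop := S ⊆ T ∧ ∀ k < n, spl S k = spl T k

/-- A large-tree forcing notion: a set of E0-large trees closed under restriction
and under the action of strings. -/
def IsLTF (P : Set Tr) : Prop :=
  (∀ T ∈ P, IsLT T) ∧
  (∀ T ∈ P, ∀ u ∈ T, restr T u ∈ P) ∧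
  (∀ T ∈ P, ∀ s : Str, actT s T ∈ P)

/-- `T` is an `n`-collage over `P`: `T ∈ LT` and `T→s ∈ P` for all `s ∈ 2^n`. -/
def IsCollage (P : Set Tr) (n : ℕ) (T : Tr) : Prop :=
  IsLT T ∧ ∀ s : Str, s.length = n → splitS T s ∈ P

/-- `D` is open dense in `P` (as a set of trees). -/
def OpenDense1 (P D : Set Tr) : Prop :=
  D ⊆ P ∧ (∀ S ∈ P, ∃ T ∈ D, T ⊆ S) ∧ (∀ S ∈ P, ∀ T ∈ D, S ⊆ T → S ∈ D)

/-- `⟨T,T'⟩` is a condition of the conditional product `P ×_{E0} P`. -/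
def CondPair (P : Set Tr) (p : Tr × Tr) : Prop :=
  p.1 ∈ P ∧ p.2 ∈ P ∧ ∃ s : Str, actT s p.1 = p.2

/-- Componentwise order on pairs of trees: `p ≤ q`. -/
def pleq (p q : Tr × Tr) : Prop := p.1 ⊆ q.1 ∧ p.2 ⊆ q.2

/-- Compatibility of two conditions in `P ×_{E0} P`. -/
def Compat (P : Set Tr) (p q : Tr × Tr) : Prop :=
  ∃ r : Tr × Tr, CondPair P r ∧ pleq r p ∧ pleq r q

/-- `D` is pre-dense in `P ×_{E0} P`. -/
def PreDense2 (P : Set Tr) (D : Set (Tr × Tr)) : Prop :=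
  ∀ p : Tr × Tr, CondPair P p → ∃ q ∈ D, Compat P p q

/-- `D` is open dense in `P ×_{E0} P`. -/
def OpenDense2 (P : Set Tr) (D : Set (Tr × Tr)) : Prop :=
  D ⊆ {p | CondPair P p} ∧
  (∀ p : Tr × Tr, CondPair P p → ∃ q ∈ D, pleq q p) ∧
  (∀ p : Tr × Tr, CondPair P p → ∀ q ∈ D, pleq p q → p ∈ D)

/-- A `P ×_{E0} P`-real name `c = ⟨C_n^i⟩`. -/
def IsRealName (P : Set Tr) (c : ℕ → Bool → Set (Tr × Tr)) : Prop :=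
  (∀ n : ℕ, ∀ i : Bool, c n i ⊆ {p | CondPair P p}) ∧
  (∀ n : ℕ, PreDense2 P (c n false ∪ c n true)) ∧
  (∀ n : ℕ, ∀ p ∈ c n false, ∀ q ∈ c n true, ¬ Compat P p q)

/-- `p` directly forces `c(n) = i`. -/
def DFVal (c : ℕ → Bool → Set (Tr × Tr)) (p : Tr × Tr) (n : ℕ) (i : Bool) : Prop :=
  ∃ q ∈ c n i, pleq p q

/-- `p` directly forces `s ⊂ c`. -/
def DFPrefix (c : ℕ → Bool → Set (Tr × Tr)) (p : Tr × Tr) (s : Str) : Prop :=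
  ∀ n < s.length, DFVal c p n (s.getD n false)

/-- `p` directly forces `c ∉ [U]`. -/
def DFAvoid (c : ℕ → Bool → Set (Tr × Tr)) (p : Tr × Tr) (U : Tr) : Prop :=
  ∃ s : Str, s ∉ U ∧ DFPrefix c p s

/-- `p` directly forces `c ≠ d`: there are incomparable strings `s, t` such that
`p` directly forces `s ⊂ c` and `t ⊂ d`. -/
def DFNe (c d : ℕ → Bool → Set (Tr × Tr)) (p : Tr × Tr) : Prop :=
  ∃ s t : Str, ¬ s <+: t ∧ ¬ t <+: s ∧ DFPrefix c p s ∧ DFPrefix d p t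

/-- The action `σ·c` of a string on a real name. -/
def actName (σ : Str) (c : ℕ → Bool → Set (Tr × Tr)) : ℕ → Bool → Set (Tr × Tr) :=
  fun n i => if σ.getD n false = true then c n (!i) else c n i

/-- The name `π_left` of the left generic real. -/
def piLeft : ℕ → Bool → Set (Tr × Tr) := fun n i =>
  {p | ∃ s t : Str, s.length = n+1 ∧ t.length = n+1 ∧ s.getD n false = i ∧ p = (Tbr s, Tbr t)}

/-- The name `π_right` of the right generic real. -/
def piRight : ℕ → Bool → Set (Tr × Tr) := fun n i =>
  {p | ∃ s t : Str, s.length = n+1 ∧ t.length = n+1 ∧ t.getD n false = i ∧ p = (Tbr s, Tbr t)}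


/-!
Write `T` as the large tree generated by a stem `r` and blocks `q`. For one pair `s, t`,
density gives `⟨A, B⟩ ∈ D` below `⟨T→s, T→t⟩`; after shrinking `A`, both `A` and `B = ρ·A`
are large trees with the same blocks `π`, and their stems are `stem(T→s)⌢δ_s` and
`stem(T→t)⌢δ_t` with `|δ_s| = |δ_t|`. Appending `δ_i` to the `(n-1)`-st block on side `i` and
continuing with `π` gives an `n`-collage `Q` with the same splitting levels below `n`, whose
parts are translates of `A` or `B` (hence in `P`) and with `Q→s = A`, `Q→t = B`. Repeating
this for the finitely many pairs proves the theorem, since `D` is open.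
-/

open List

structure IsBlockSystem (q : ℕ → Bool → Str) : Prop where
  length_true : ∀ k, (q k true).length = (q k false).length
  one_le_length : ∀ k, 1 ≤ (q k false).length
  head?_eq : ∀ k i, (q k i).head? = some i

def shift (q : ℕ → Bool → Str) (m : ℕ) : ℕ → Bool → Str := fun k => q (k + m)

/-- `node r q u = r⌢q 0 (u 0)⌢…⌢q (|u|-1) (u (|u|-1))`. -/
def node : Str → (ℕ → Bool → Str) → Str → Str
  | r, _, [] => r
  | r, q, i :: u => node (r ++ q 0 i) (shift q 1) u

def largeTree (r : Str) (q : ℕ → Bool → Str) : Tr := {t | ∃ u, t <+: node r q u}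

namespace IsBlockSystem

variable {q : ℕ → Bool → Str}

theorem length_eq (hq : IsBlockSystem q) (k : ℕ) (i : Bool) :
    (q k i).length = (q k false).length := by
  cases i
  · rfl
  · exact hq.length_true k

theorem exists_eq_cons (hq : IsBlockSystem q) (k : ℕ) (i : Bool) : ∃ w, q k i = i :: w := by
  have h := hq.head?_eq k i
  rcases hqk : q k i with _ | ⟨a, w⟩
  · simp [hqk] at h
  · simp only [hqk, head?_cons, Option.some.injEq] at h
    exact ⟨w, by rw [h]⟩

theorem shift (hq : IsBlockSystem q) (m : ℕ) : IsBlockSystem (shift q m) :=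
  ⟨fun _ => hq.length_true _, fun _ => hq.one_le_length _, fun _ => hq.head?_eq _⟩

theorem le_splN (hq : IsBlockSystem q) (r : Str) (k : ℕ) : k ≤ splN r q k := by
  induction k with
  | zero => exact Nat.zero_le _
  | succ k ih => have := hq.one_le_length k; simp only [splN]; omega

end IsBlockSystem

section Node

variable {r : Str} {q : ℕ → Bool → Str}

theorem node_append (r : Str) (q : ℕ → Bool → Str) (u v : Str) :
    node r q (u ++ v) = node (node r q u) (shift q u.length) v := by
  induction u generalizing r q with
  | nil => rfl
  | cons i u ih => exact ih _ _

theorem node_concat (r : Str) (q : ℕ → Bool → Str) (u : Str) (i : Bool) :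
    node r q (u ++ [i]) = node r q u ++ q u.length i := by
  simp [node_append, node, shift]

theorem prefix_node (r : Str) (q : ℕ → Bool → Str) (u : Str) : r <+: node r q u := by
  induction u generalizing r q with
  | nil => exact prefix_refl r
  | cons i u ih => exact (prefix_append r _).trans (ih _ _)

theorem node_prefix_node_append (r : Str) (q : ℕ → Bool → Str) (u v : Str) :
    node r q u <+: node r q (u ++ v) := by
  rw [node_append]; exact prefix_node _ _ _

theorem length_node (hq : IsBlockSystem q) (u : Str) :
    (node r q u).length = splN r q u.length := by
  induction u using List.reverseRecOn with
  | nil => rfl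
  | append_singleton u i ih =>
    rw [node_concat, length_append, ih, hq.length_eq, length_append, length_singleton]; rfl

theorem node_congr {q' : ℕ → Bool → Str} {u : Str} (h : ∀ k < u.length, q k = q' k) :
    node r q u = node r q' u := by
  induction u generalizing r q q' with
  | nil => rfl
  | cons i u ih =>
    simp only [node]
    rw [h 0 (by simp)]
    exact ih fun k hk => h (k + 1) (by simp; omega)

theorem append_singleton_prefix_node_cons (hq : IsBlockSystem q) (i : Bool) (u : Str) :
    r ++ [i] <+: node r q (i :: u) := by
  obtain ⟨w, hw⟩ := hq.exists_eq_cons 0 i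
  refine (prefix_append_right_inj r).2 ?_ |>.trans (prefix_node (r ++ q 0 i) _ u)
  rw [hw]; exact ⟨w, rfl⟩

theorem node_ofFn (r : Str) (q : ℕ → Bool → Str) (n : ℕ) (f : ℕ → Bool) :
    node r q (ofFn fun k : Fin n => f k) = r ++ ((range n).map fun k => q k (f k)).flatten := by
  induction n generalizing r q f with
  | zero => simp [node]
  | succ n ih =>
    rw [ofFn_succ, range_succ_eq_map]
    simp only [node, Fin.val_zero, Fin.val_succ]
    rw [ih _ _ fun k => f (k + 1)]
    simp [shift, Function.comp_def]

end Node

theorem prefix_of_or_of_length_le {α : Type*} {u v : List α} (h : u <+: v ∨ v <+: u)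
    (hl : u.length ≤ v.length) : u <+: v := by
  rcases h with h | h
  · exact h
  · rw [h.eq_of_length (le_antisymm h.length_le hl)]

theorem eq_of_append_singleton_prefix {α : Type*} {r t : List α} {i j : α} (hi : r ++ [i] <+: t)
    (hj : r ++ [j] <+: t) : i = j := by
  have h := prefix_of_prefix_length_le hi hj (by simp)
  simpa using h

theorem length_le_of_forall_comparable {r t : Str}
    (h : ∀ i : Bool, r ++ [i] <+: t ∨ t <+: r ++ [i]) : t.length ≤ r.length := by
  by_contra! hlt
  have hpre : ∀ i : Bool, r ++ [i] <+: t := fun i =>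
    prefix_of_or_of_length_le (h i) (by simp; omega)
  exact Bool.false_ne_true (eq_of_append_singleton_prefix (hpre false) (hpre true))

theorem ofFn_getD (l : Str) : ofFn (fun k : Fin l.length => l.getD k false) = l := by
  apply ext_getElem <;> simp

section LargeTree

variable {r : Str} {q : ℕ → Bool → Str}

theorem mem_largeTree_of_prefix {t u : Str} (h : t <+: node r q u) : t ∈ largeTree r q :=
  ⟨u, h⟩

theorem self_mem_largeTree : r ∈ largeTree r q := ⟨[], prefix_refl r⟩

theorem prefix_or_prefix_of_mem_largeTree {t : Str} (ht : t ∈ largeTree r q) :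
    r <+: t ∨ t <+: r := by
  obtain ⟨u, hu⟩ := ht
  exact prefix_or_prefix_of_prefix (prefix_node r q u) hu

theorem append_singleton_mem_largeTree (hq : IsBlockSystem q) (i : Bool) :
    r ++ [i] ∈ largeTree r q :=
  mem_largeTree_of_prefix (append_singleton_prefix_node_cons hq i [])

theorem ltwit_iff {T : Tr} : LTwit T r q ↔ IsBlockSystem q ∧ T = largeTree r q := by
  have hset : {t | ∃ n : ℕ, ∃ f : ℕ → Bool,
      t <+: r ++ ((List.range (n+1)).map (fun k => q k (f k))).flatten} = largeTree r q := by
    ext t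
    constructor
    · rintro ⟨n, f, ht⟩
      exact mem_largeTree_of_prefix (by rwa [← node_ofFn] at ht)
    · rintro ⟨u, hu⟩
      refine ⟨u.length, fun k => (u ++ [false]).getD k false, ?_⟩
      have h := node_ofFn r q (u ++ [false]).length fun k => (u ++ [false]).getD k false
      rw [ofFn_getD, length_append, length_singleton] at h
      rw [← h]
      exact hu.trans (node_prefix_node_append r q u [false])
  simp only [LTwit, hset]
  exact ⟨fun ⟨h1, h2, h3⟩ => ⟨⟨fun k => (h1 k).1, fun k => (h1 k).2, h2⟩, h3⟩,
    fun ⟨⟨h1, h2, h3⟩, h4⟩ => ⟨fun k => ⟨h1 k, h2 k⟩, h3, h4⟩⟩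

theorem isLT_largeTree (hq : IsBlockSystem q) : IsLT (largeTree r q) :=
  ⟨r, q, ltwit_iff.2 ⟨hq, rfl⟩⟩

theorem stem_eq {T : Tr} (hr : r ∈ T) (hrT : restr T r = T)
    (hmax : ∀ t ∈ T, restr T t = T → t.length ≤ r.length) : stem T = r := by
  obtain ⟨hsT, hsres, hsmax⟩ : stem T ∈ T ∧ restr T (stem T) = T ∧
      ∀ t ∈ T, restr T t = T → t.length ≤ (stem T).length :=
    Classical.epsilon_spec (p := fun s => s ∈ T ∧ restr T s = T ∧
      ∀ t ∈ T, restr T t = T → t.length ≤ s.length) ⟨r, hr, hrT, hmax⟩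
  have hlen : (stem T).length = r.length := le_antisymm (hmax _ hsT hsres) (hsmax r hr hrT)
  have hmem : stem T ∈ restr T r := by rw [hrT]; exact hsT
  have hcomp : r <+: stem T ∨ stem T <+: r := hmem.2
  rcases hcomp with h | h
  · exact (h.eq_of_length hlen.symm).symm
  · exact h.eq_of_length hlen

theorem stem_largeTree (hq : IsBlockSystem q) : stem (largeTree r q) = r := by
  refine stem_eq self_mem_largeTree
    (Set.sep_eq_self_iff_mem_true.2 fun t ht => prefix_or_prefix_of_mem_largeTree ht)
    fun t ht hres => length_le_of_forall_comparable fun i => ?_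
  have hi : r ++ [i] ∈ restr (largeTree r q) t := by
    rw [hres]; exact append_singleton_mem_largeTree hq i
  exact hi.2.symm

theorem restr_largeTree (hq : IsBlockSystem q) (i : Bool) :
    restr (largeTree r q) (r ++ [i]) = largeTree (r ++ q 0 i) (shift q 1) := by
  ext t
  constructor
  · rintro ⟨⟨u, htu⟩, hit | hti⟩
    · cases u with
      | nil => exact absurd (hit.trans htu).length_le (by simp [node])
      | cons j u =>
        obtain rfl : i = j :=
          eq_of_append_singleton_prefix (hit.trans htu) (append_singleton_prefix_node_cons hq j u)
        exact ⟨u, htu⟩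
    · exact mem_largeTree_of_prefix (u := [])
        (hti.trans (append_singleton_prefix_node_cons hq i []))
  · rintro ⟨u, htu⟩
    exact ⟨⟨i :: u, htu⟩,
      (prefix_or_prefix_of_prefix (append_singleton_prefix_node_cons hq i u) htu)⟩

theorem split1_largeTree (hq : IsBlockSystem q) (i : Bool) :
    split1 (largeTree r q) i = largeTree (r ++ q 0 i) (shift q 1) := by
  rw [split1, stem_largeTree hq, restr_largeTree hq]

theorem splitS_largeTree (hq : IsBlockSystem q) (u : Str) :
    splitS (largeTree r q) u = largeTree (node r q u) (shift q u.length) := by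
  induction u generalizing r q with
  | nil => rfl
  | cons i u ih =>
    change splitS (split1 (largeTree r q) i) u = _
    rw [split1_largeTree hq, ih (hq.shift 1)]
    rfl

theorem blocks_zero_eq_of_largeTree_eq {q' : ℕ → Bool → Str} (hq : IsBlockSystem q)
    (hq' : IsBlockSystem q') (h : largeTree r q = largeTree r q') :
    q 0 = q' 0 ∧
      largeTree (r ++ q 0 false) (shift q 1) = largeTree (r ++ q 0 false) (shift q' 1) := by
  have hsplit : ∀ i, largeTree (r ++ q 0 i) (shift q 1) = largeTree (r ++ q' 0 i) (shift q' 1) :=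
    fun i => by rw [← split1_largeTree hq, ← split1_largeTree hq', h]
  have h0 : q 0 = q' 0 := funext fun i => append_cancel_left <| by
    rw [← stem_largeTree (r := r ++ q 0 i) (hq.shift 1), hsplit i,
      stem_largeTree (hq'.shift 1)]
  exact ⟨h0, by rw [hsplit false, h0]⟩

theorem eq_of_largeTree_eq {r' : Str} {q' : ℕ → Bool → Str} (hq : IsBlockSystem q)
    (hq' : IsBlockSystem q') (h : largeTree r q = largeTree r' q') : r = r' ∧ q = q' := by
  obtain rfl : r = r' := by rw [← stem_largeTree (r := r) hq, h, stem_largeTree hq']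
  refine ⟨rfl, funext fun k => ?_⟩
  induction k generalizing r q q' with
  | zero => exact (blocks_zero_eq_of_largeTree_eq hq hq' h).1
  | succ k ih => exact ih (hq.shift 1) (hq'.shift 1) (blocks_zero_eq_of_largeTree_eq hq hq' h).2

theorem spl_largeTree (hq : IsBlockSystem q) : spl (largeTree r q) = splN r q := by
  have hw : LTwit (largeTree r q) (witness (largeTree r q)).1 (witness (largeTree r q)).2 :=
    Classical.epsilon_spec (p := fun rq : Str × (ℕ → Bool → Str) => LTwit _ rq.1 rq.2)
      ⟨(r, q), ltwit_iff.2 ⟨hq, rfl⟩⟩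
  obtain ⟨hq', heq⟩ := ltwit_iff.1 hw
  obtain ⟨h1, h2⟩ := eq_of_largeTree_eq hq' hq heq.symm
  unfold spl
  rw [h1, h2]

theorem prefix_of_largeTree_subset {α a : Str} {π : ℕ → Bool → Str} (hπ : IsBlockSystem π)
    (h : largeTree α π ⊆ largeTree a q) : a <+: α :=
  prefix_of_or_of_length_le (prefix_or_prefix_of_mem_largeTree (h self_mem_largeTree))
    (length_le_of_forall_comparable fun i =>
      (prefix_or_prefix_of_mem_largeTree (h (append_singleton_mem_largeTree hπ i))).symm)

theorem exists_mem_splitS (hq : IsBlockSystem q) (n : ℕ) {t : Str} (ht : t ∈ largeTree r q) :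
    ∃ u : Str, u.length = n ∧ t ∈ splitS (largeTree r q) u := by
  obtain ⟨u, hu⟩ := ht
  set v := u ++ replicate n false
  have hn : (v.take n).length = n := by simp [v]
  refine ⟨v.take n, hn, ?_⟩
  rw [splitS_largeTree hq, hn]
  refine ⟨v.drop n, ?_⟩
  have hsplit := node_append r q (v.take n) (v.drop n)
  rw [take_append_drop, hn] at hsplit
  rw [← hsplit]
  exact hu.trans (node_prefix_node_append r q u _)

end LargeTree

theorem splitS_subset (T : Tr) (u : Str) : splitS T u ⊆ T := by
  induction u generalizing T with
  | nil => exact subset_rfl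
  | cons i u ih => exact (ih (split1 T i)).trans fun _ ht => ht.1

section Act

theorem length_act (σ t : Str) : (act σ t).length = t.length := by simp [act]

theorem getElem_act (σ t : Str) {k : ℕ} (hk : k < (act σ t).length) :
    (act σ t)[k] = Bool.xor (σ.getD k false) (t[k]'(by rwa [length_act] at hk)) := by
  simp [act]

theorem nil_act (t : Str) : act [] t = t := by
  apply ext_getElem (length_act _ _)
  intro k _ _
  simp [getElem_act]

theorem act_append (σ u w : Str) : act σ (u ++ w) = act σ u ++ act (σ.drop u.length) w := by
  apply ext_getElem (by simp [length_act])
  intro k h₁ h₂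
  by_cases hk : k < u.length
  · rw [getElem_append_left (by rwa [length_act]), getElem_act, getElem_act,
      getElem_append_left hk]
  · have hdrop : (σ.drop u.length).getD (k - u.length) false = σ.getD k false := by
      simp [Nat.add_sub_cancel' (not_lt.1 hk)]
    rw [getElem_append_right (by rw [length_act]; omega), getElem_act, getElem_act,
      getElem_append_right (by omega)]
    simp only [length_act, hdrop]

theorem act_append_of_length_le {σ u : Str} (w : Str) (h : σ.length ≤ u.length) :
    act σ (u ++ w) = act σ u ++ w := by
  rw [act_append, drop_eq_nil_of_le h, nil_act]

theorem act_prefix_act (σ : Str) {u v : Str} (h : u <+: v) : act σ u <+: act σ v := by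
  obtain ⟨w, rfl⟩ := h
  rw [act_append]
  exact prefix_append _ _

theorem act_act (σ t : Str) : act σ (act σ t) = t := by
  apply ext_getElem (by simp [length_act])
  intro k _ _
  simp [getElem_act]

theorem act_act_left {a b : Str} (h : a.length = b.length) : act (act a b) a = b := by
  apply ext_getElem (by simp [length_act, h])
  intro k h₁ h₂
  have hb : k < b.length := by rwa [length_act] at h₁
  rw [getElem_act, getD_eq_getElem _ _ (by rwa [length_act]), getElem_act]
  rw [getD_eq_getElem _ _ (by omega)]
  cases a[k] <;> simp

theorem act_node {σ r : Str} (q : ℕ → Bool → Str) (u : Str) (h : σ.length ≤ r.length) :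
    act σ (node r q u) = node (act σ r) q u := by
  induction u generalizing r q with
  | nil => rfl
  | cons i u ih =>
    simp only [node]
    rw [ih _ (by simp; omega), act_append_of_length_le _ h]

theorem actT_largeTree {σ r : Str} (q : ℕ → Bool → Str) (h : σ.length ≤ r.length) :
    actT σ (largeTree r q) = largeTree (act σ r) q := by
  ext t
  constructor
  · rintro ⟨t', ⟨u, hu⟩, rfl⟩
    exact ⟨u, act_node q u h ▸ act_prefix_act σ hu⟩
  · rintro ⟨u, hu⟩
    refine ⟨act σ t, ⟨u, ?_⟩, act_act σ t⟩
    have h' := act_prefix_act σ hu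
    rwa [act_node q u (by rwa [length_act]), act_act] at h'

theorem actT_largeTree_append {a b : Str} (x : Str) (π : ℕ → Bool → Str)
    (h : a.length = b.length) : actT (act a b) (largeTree (a ++ x) π) = largeTree (b ++ x) π := by
  rw [actT_largeTree π (by simp [length_act, h]),
    act_append_of_length_le x (by rw [length_act, h]), act_act_left h]

end Act

section Forcing

variable {P : Set Tr}

theorem IsLTF.exists_eq_largeTree (hP : IsLTF P) {T : Tr} (hT : T ∈ P) :
    ∃ r q, IsBlockSystem q ∧ T = largeTree r q := by
  obtain ⟨r, q, hw⟩ := hP.1 T hT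
  exact ⟨r, q, ltwit_iff.1 hw⟩

theorem IsLTF.splitS_mem (hP : IsLTF P) {T : Tr} (hT : T ∈ P) (u : Str) : splitS T u ∈ P := by
  induction u generalizing T with
  | nil => exact hT
  | cons i u ih =>
    obtain ⟨r, q, hq, rfl⟩ := hP.exists_eq_largeTree hT
    refine ih (hP.2.1 _ hT _ ?_)
    rw [stem_largeTree hq]
    exact append_singleton_mem_largeTree hq i

theorem IsLTF.translate (hP : IsLTF P) {a b x : Str} {π q : ℕ → Bool → Str}
    (hab : a.length = b.length) (hmem : largeTree (a ++ x) π ∈ P)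
    (hsub : largeTree (a ++ x) π ⊆ largeTree a q) :
    largeTree (b ++ x) π ∈ P ∧ largeTree (b ++ x) π ⊆ largeTree b q := by
  have hT := actT_largeTree_append [] q hab
  simp only [append_nil] at hT
  rw [← actT_largeTree_append x π hab, ← hT]
  exact ⟨hP.2.2 _ hmem _, Set.image_mono hsub⟩

theorem IsCollage.condPair {n : ℕ} {Q : Tr} (hQ : IsCollage P n Q) {u v : Str}
    (hu : u.length = n) (hv : v.length = n) : CondPair P (splitS Q u, splitS Q v) := by
  obtain ⟨⟨r, q, hw⟩, hparts⟩ := hQ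
  obtain ⟨hq, rfl⟩ := ltwit_iff.1 hw
  refine ⟨hparts u hu, hparts v hv, act (node r q u) (node r q v), ?_⟩
  have h := actT_largeTree_append [] (shift q n) (a := node r q u) (b := node r q v)
    (by rw [length_node hq, length_node hq, hu, hv])
  simpa only [splitS_largeTree hq, hu, hv, append_nil] using h

theorem IsLTF.exists_largeTree_pair_mem (hP : IsLTF P) {D : Set (Tr × Tr)}
    (hD : OpenDense2 P D) {X Y : Tr} (hXY : CondPair P (X, Y)) :
    ∃ α β π, IsBlockSystem π ∧ α.length = β.length ∧ largeTree α π ⊆ X ∧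
      largeTree β π ⊆ Y ∧ (largeTree α π, largeTree β π) ∈ D := by
  obtain ⟨⟨A, B⟩, hAB, hAX, hBY⟩ := hD.2.1 _ hXY
  obtain ⟨hAP, -, ρ, rfl⟩ : A ∈ P ∧ B ∈ P ∧ ∃ ρ, actT ρ A = B := hD.1 hAB
  obtain ⟨α, π, hπ, rfl⟩ := hP.exists_eq_largeTree hAP
  -- shrink `A` until its stem is at least as long as `ρ`, so that `ρ` acts on the stem only
  set v := replicate ρ.length false
  have hA' : splitS (largeTree α π) v = largeTree (node α π v) (shift π ρ.length) := by
    rw [splitS_largeTree hπ, length_replicate]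
  have hlen : ρ.length ≤ (node α π v).length := by
    rw [length_node hπ, length_replicate]; exact hπ.le_splN α _
  have hsub : largeTree (node α π v) (shift π ρ.length) ⊆ largeTree α π :=
    hA' ▸ splitS_subset _ v
  have hρ := actT_largeTree (shift π ρ.length) hlen
  refine ⟨node α π v, act ρ (node α π v), shift π ρ.length, hπ.shift _,
    (length_act _ _).symm, hsub.trans hAX, hρ ▸ (Set.image_mono hsub).trans hBY, ?_⟩
  have hA'P : largeTree (node α π v) (shift π ρ.length) ∈ P := hA' ▸ hP.splitS_mem hAP v
  exact hD.2.2 _ ⟨hA'P, hρ ▸ hP.2.2 _ hA'P ρ, ρ, hρ⟩ _ hAB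
    ⟨hsub, hρ ▸ Set.image_mono hsub⟩

end Forcing

section Graft

variable {q π : ℕ → Bool → Str} {m : ℕ} {δ : Bool → Str}

def graft (q : ℕ → Bool → Str) (m : ℕ) (δ : Bool → Str) (π : ℕ → Bool → Str) :
    ℕ → Bool → Str :=
  fun k i => if k < m then q k i else if k = m then q m i ++ δ i else π (k - (m + 1)) i

theorem IsBlockSystem.graft (hq : IsBlockSystem q) (hπ : IsBlockSystem π)
    (hδ : (δ true).length = (δ false).length) : IsBlockSystem (graft q m δ π) := by
  refine ⟨fun k => ?_, fun k => ?_, fun k i => ?_⟩ <;> unfold E0L.graft <;> split_ifs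
  · exact hq.length_true k
  · simp [hq.length_true, hδ]
  · exact hπ.length_true _
  · exact hq.one_le_length k
  · simp only [length_append]; have := hq.one_le_length m; omega
  · exact hπ.one_le_length _
  · exact hq.head?_eq k i
  · rw [head?_append, hq.head?_eq]; rfl
  · exact hπ.head?_eq _ i

theorem node_graft {r u : Str} (hu : u.length = m + 1) :
    node r (graft q m δ π) u = node r q u ++ δ (u.getD m false) := by
  obtain ⟨u, i, rfl⟩ : ∃ u' i, u = u' ++ [i] := by
    rcases eq_nil_or_concat u with rfl | ⟨u', i, rfl⟩
    · simp at hu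
    · exact ⟨u', i, concat_eq_append⟩
  simp only [length_append, length_singleton, Nat.add_right_cancel_iff] at hu
  subst hu
  rw [node_concat, node_concat,
    node_congr (q' := q) fun k hk => funext fun i => by simp [graft, hk]]
  simp [graft]

theorem shift_graft : shift (graft q m δ π) (m + 1) = π := by
  funext k i
  simp [shift, graft, show ¬k + (m + 1) < m by omega, show k + (m + 1) ≠ m by omega]

theorem splN_graft (r : Str) {k : ℕ} (hk : k ≤ m) :
    splN r (graft q m δ π) k = splN r q k := by
  induction k with
  | zero => rfl
  | succ k ih => simp [splN, ih (by omega), graft, show k < m by omega]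

theorem splitS_largeTree_graft {r u : Str} (hq : IsBlockSystem q) (hπ : IsBlockSystem π)
    (hδ : (δ true).length = (δ false).length) (hu : u.length = m + 1) :
    splitS (largeTree r (graft q m δ π)) u =
      largeTree (node r q u ++ δ (u.getD m false)) π := by
  rw [splitS_largeTree (hq.graft hπ hδ), node_graft hu, hu, shift_graft]

end Graft

def Refines (n : ℕ) (Q T : Tr) : Prop :=
  subN n Q T ∧ ∀ u : Str, u.length = n → splitS Q u ⊆ splitS T u

theorem Refines.refl (n : ℕ) (T : Tr) : Refines n T T :=
  ⟨⟨subset_rfl, fun _ _ => rfl⟩, fun _ _ => subset_rfl⟩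

theorem Refines.trans {n : ℕ} {S T U : Tr} (h₁ : Refines n S T) (h₂ : Refines n T U) :
    Refines n S U :=
  ⟨⟨h₁.1.1.trans h₂.1.1, fun k hk => (h₁.1.2 k hk).trans (h₂.1.2 k hk)⟩,
    fun u hu => (h₁.2 u hu).trans (h₂.2 u hu)⟩

section Fusion

variable {P : Set Tr} {D : Set (Tr × Tr)}

theorem IsLTF.exists_graft_collage (hP : IsLTF P) {r : Str} {q π : ℕ → Bool → Str}
    (hq : IsBlockSystem q) (hπ : IsBlockSystem π) {m : ℕ} (a δ : Bool → Str)
    (ha : ∀ i, (a i).length = m + 1 ∧ (a i).getD m false = i)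
    (hδ : (δ true).length = (δ false).length)
    (hpiece : ∀ i, largeTree (node r q (a i) ++ δ i) π ∈ P ∧
      largeTree (node r q (a i) ++ δ i) π ⊆ splitS (largeTree r q) (a i)) :
    ∃ Q, IsCollage P (m + 1) Q ∧ Refines (m + 1) Q (largeTree r q) ∧
      ∀ i, splitS Q (a i) = largeTree (node r q (a i) ++ δ i) π := by
  have hQ := hq.graft hπ hδ (m := m)
  -- every part of the graft is a translate of one of the two given pieces
  have hparts : ∀ u : Str, u.length = m + 1 →
      splitS (largeTree r (graft q m δ π)) u ∈ P ∧
        splitS (largeTree r (graft q m δ π)) u ⊆ splitS (largeTree r q) u := by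
    intro u hu
    obtain ⟨hai, hi⟩ := ha (u.getD m false)
    obtain ⟨hmem, hsub⟩ := hpiece (u.getD m false)
    rw [splitS_largeTree hq, hai] at hsub
    rw [splitS_largeTree_graft hq hπ hδ hu, splitS_largeTree hq, hu]
    exact hP.translate (by rw [length_node hq, length_node hq, hai, hu]) hmem hsub
  refine ⟨largeTree r (graft q m δ π), ⟨isLT_largeTree hQ, fun u hu => (hparts u hu).1⟩,
    ⟨⟨fun t ht => ?_, fun k hk => ?_⟩, fun u hu => (hparts u hu).2⟩, fun i => ?_⟩
  · obtain ⟨u, hu, htu⟩ := exists_mem_splitS hQ (m + 1) ht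
    exact splitS_subset _ u ((hparts u hu).2 htu)
  · rw [spl_largeTree hQ, spl_largeTree hq, splN_graft r (by omega)]
  · rw [splitS_largeTree_graft hq hπ hδ (ha i).1, (ha i).2]

theorem IsLTF.exists_refines_pair_mem (hP : IsLTF P) (hD : OpenDense2 P D) {n : ℕ} {T : Tr}
    (hT : IsCollage P n T) {s t : Str} (hs : s.length = n) (ht : t.length = n)
    (hst : s.getD (n - 1) false ≠ t.getD (n - 1) false) :
    ∃ Q, IsCollage P n Q ∧ Refines n Q T ∧ (splitS Q s, splitS Q t) ∈ D := by
  obtain ⟨m, rfl⟩ : ∃ m, n = m + 1 :=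
    Nat.exists_eq_succ_of_ne_zero fun h => hst (by simp_all [length_eq_zero_iff])
  obtain ⟨r, q, hw⟩ := hT.1
  obtain ⟨hq, rfl⟩ := ltwit_iff.1 hw
  obtain ⟨α, β, π, hπ, hαβ, hαs, hβt, hαβD⟩ :=
    hP.exists_largeTree_pair_mem hD (hT.condPair hs ht)
  rw [splitS_largeTree hq, hs] at hαs
  rw [splitS_largeTree hq, ht] at hβt
  obtain ⟨δs, rfl⟩ := prefix_of_largeTree_subset hπ hαs
  obtain ⟨δt, rfl⟩ := prefix_of_largeTree_subset hπ hβt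
  have hδ : δs.length = δt.length := by
    simpa [length_node hq, hs, ht] using hαβ
  set i₀ := s.getD m false
  have ht₀ : t.getD m false = !i₀ := Bool.eq_not_of_ne (Ne.symm hst)
  let a : Bool → Str := fun i => if i = i₀ then s else t
  let δ : Bool → Str := fun i => if i = i₀ then δs else δt
  have ha : ∀ i, (a i).length = m + 1 ∧ (a i).getD m false = i := by
    intro i
    by_cases hi : i = i₀
    · simp only [a, hi, if_true, hs, true_and]; rfl
    · simp only [a, hi, if_false, ht, ht₀, true_and]
      exact (Bool.eq_not_of_ne hi).symm
  have hpiece : ∀ i, largeTree (node r q (a i) ++ δ i) π ∈ P ∧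
      largeTree (node r q (a i) ++ δ i) π ⊆ splitS (largeTree r q) (a i) := by
    intro i
    by_cases hi : i = i₀ <;> simp only [a, δ, hi, if_true, if_false, splitS_largeTree hq, hs, ht]
    · exact ⟨(hD.1 hαβD).1, hαs⟩
    · exact ⟨(hD.1 hαβD).2.1, hβt⟩
  obtain ⟨Q, hQ, hQT, hQa⟩ := hP.exists_graft_collage hq hπ a δ ha
    (by by_cases h : i₀ <;> simp [δ, h, hδ]) hpiece
  refine ⟨Q, hQ, hQT, ?_⟩
  have hQs := hQa i₀
  have hQt := hQa (!i₀)
  simp only [a, δ, if_true, Bool.not_ne_self, if_false] at hQs hQt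
  rwa [hQs, hQt]

theorem IsLTF.exists_refines_forall_mem (hP : IsLTF P) (hD : OpenDense2 P D) {n : ℕ} {T : Tr}
    (hT : IsCollage P n T) {S : Set (Str × Str)} (hS : S.Finite)
    (hgood : ∀ p ∈ S, p.1.length = n ∧ p.2.length = n ∧
      p.1.getD (n - 1) false ≠ p.2.getD (n - 1) false) :
    ∃ Q, IsCollage P n Q ∧ Refines n Q T ∧
      ∀ p ∈ S, (splitS Q p.1, splitS Q p.2) ∈ D := by
  induction S, hS using Set.Finite.induction_on with
  | empty => exact ⟨T, hT, Refines.refl n T, by simp⟩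
  | @insert p S _ _ ih =>
    obtain ⟨Q₁, hQ₁, hQ₁T, hQ₁D⟩ :=
      ih fun p' hp' => hgood p' (Set.mem_insert_of_mem _ hp')
    obtain ⟨hs, ht, hst⟩ := hgood p (Set.mem_insert _ _)
    obtain ⟨Q, hQ, hQQ₁, hQD⟩ := hP.exists_refines_pair_mem hD hQ₁ hs ht hst
    refine ⟨Q, hQ, hQQ₁.trans hQ₁T, ?_⟩
    rintro p' (rfl | hp')
    · exact hQD
    · obtain ⟨hs', ht', -⟩ := hgood p' (Set.mem_insert_of_mem _ hp')
      exact hD.2.2 _ (hQ.condPair hs' ht') _ (hQ₁D p' hp') ⟨hQQ₁.2 _ hs', hQQ₁.2 _ ht'⟩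

end Fusion

theorem stmt16_general (P : Set Tr) (hP : IsLTF P) (n : ℕ)
    (T : Tr) (hT : IsCollage P n T) (D : Set (Tr × Tr)) (hD : OpenDense2 P D) :
    ∃ Q : Tr, IsCollage P n Q ∧ subN n Q T ∧
      ∀ s t : Str, s.length = n → t.length = n →
        s.getD (n-1) false ≠ t.getD (n-1) false → (splitS Q s, splitS Q t) ∈ D := by
  have hS : {p : Str × Str | p.1.length = n ∧ p.2.length = n ∧
      p.1.getD (n - 1) false ≠ p.2.getD (n - 1) false}.Finite :=
    ((List.finite_length_eq Bool n).prod (List.finite_length_eq Bool n)).subset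
      fun p hp => ⟨hp.1, hp.2.1⟩
  obtain ⟨Q, hQ, hQT, hQD⟩ := hP.exists_refines_forall_mem hD hT hS fun p hp => hp
  exact ⟨Q, hQ, hQT.1, fun s t hs ht hst => hQD (s, t) ⟨hs, ht, hst⟩⟩

/-- Lemma `stf2+`: if `P` is a large-tree forcing notion, `n ≥ 1`, `T` an
`n`-collage over `P`, and `D` open dense in `P ×_{E0} P`, then there is an `n`-collage `Q`
over `P` with `Q ⊆_n T` such that `⟨Q→s, Q→t⟩ ∈ D` whenever `s, t ∈ 2^n` and
`s(n−1) ≠ t(n−1)`. -/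
theorem stmt16 (P : Set Tr) (hP : IsLTF P) (n : ℕ) (hn : 1 ≤ n)
    (T : Tr) (hT : IsCollage P n T) (D : Set (Tr × Tr)) (hD : OpenDense2 P D) :
    ∃ Q : Tr, IsCollage P n Q ∧ subN n Q T ∧
      ∀ s t : Str, s.length = n → t.length = n →
        s.getD (n-1) false ≠ t.getD (n-1) false → (splitS Q s, splitS Q t) ∈ D :=
  stmt16_general P hP n T hT D hD

end E0L
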